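/- Let R be a Noetherian homogeneous ring with local base ring (R_0, m_0), and let M, N be finitely generated graded R-modules. If for some i ∈ ℕ the generalized local cohomology module H^i_{R_+}(M,N) is R_+-cofinite (i.e., Supp(H^i_{R_+}(M,N)) ⊆ V(R_+) and Ext^j_R(R/R_+, H^i_{R_+}(M,N)) is finitely generated for all j), then Γ_{m_0 R}(H^i_{R_+}(M,N)) is Artinian. -/

import Mathlib

/-
Write `H = H^i_{R_+}(M,N)` and `𝔪 = m₀R + R_+`, a maximal ideal (the preimage of `m₀` under
`R → R₀`). Since `Supp H ⊆ V(R_+)`, `H` is `R_+`-torsion, so `Γ_{m₀R}(H)` is `𝔪`-torsion, and its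
socle `(0 :_Γ 𝔪)` lies in `(0 :_H R_+) ≅ Hom(R/R_+, H) = Ext⁰(R/R_+, H)`, which is finitely
generated. A finitely generated module killed by `𝔪` has finite length, so Melkersson's criterion
(an `I`-torsion module whose `I`-socle is Artinian is itself Artinian, for `I` finitely
generated) shows that `Γ_{m₀R}(H)` is Artinian.
-/

open CategoryTheory CategoryTheory.Limits Opposite

/-- `ℕ` acts on `ℤ`-degrees by addition (used to grade modules over `ℕ`-graded rings). -/
instance : VAdd ℕ ℤ := ⟨fun n z => (n : ℤ) + z⟩

noncomputable section

/-- The directed system `M ⧸ a^t • M`, `t : ℕ`. -/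
def genLCModDiagram {R : Type} [CommRing R] (a : Ideal R) (M : Type) [AddCommGroup M]
    [Module R M] : ℕᵒᵖ ⥤ ModuleCat R where
  obj t := ModuleCat.of R (M ⧸ (a ^ (unop t) • ⊤ : Submodule R M))
  map {t t'} w := ModuleCat.ofHom (Submodule.mapQ (a ^ (unop t) • ⊤) (a ^ (unop t') • ⊤) LinearMap.id
    (Submodule.smul_mono (Ideal.pow_le_pow_right w.unop.down.down) le_rfl))
  map_id t := by
    ext x
    simp
  map_comp {t t' t''} f g := by
    ext x
    simp

/-- Generalized local cohomology `H^i_a(M, -)`, the direct limit of `Ext^i(M/a^t M, -)`. -/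
def genLocalCohomology {R : Type} [CommRing R] (a : Ideal R) (M : Type) [AddCommGroup M]
    [Module R M] (i : ℕ) : ModuleCat R ⥤ ModuleCat R :=
  colimit ((genLCModDiagram a M).op ⋙ Ext R (ModuleCat R) i)

/-- `H^i_a(M,N)` as an object of `ModuleCat R`. -/
abbrev GLC {R : Type} [CommRing R] (a : Ideal R) (M : Type) [AddCommGroup M] [Module R M]
    (i : ℕ) (N : Type) [AddCommGroup N] [Module R N] : ModuleCat R :=
  (genLocalCohomology a M i).obj (ModuleCat.of R N)

/-- The `a`-torsion functor `Γ_a` : the submodule of elements killed by some power of `a`. -/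
def torsionGamma {R : Type} [CommRing R] (a : Ideal R) (X : Type) [AddCommGroup X]
    [Module R X] : Submodule R X :=
  ⨆ n : ℕ, Submodule.torsionBySet R X ((a ^ n : Ideal R) : Set R)

/-- `M` has projective dimension at most `n`: all `Ext^i(M, -)` for `i > n` vanish. -/
def HasProjDimLE {R : Type} [CommRing R] (M : Type) [AddCommGroup M] [Module R M]
    (n : ℕ) : Prop :=
  ∀ i : ℕ, n < i → ∀ N : ModuleCat R,
    Subsingleton (((Ext R (ModuleCat R) i).obj (op (ModuleCat.of R M))).obj N)

/-- The irrelevant ideal `R_+` of an `ℕ`-graded ring. -/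
def irrIdeal {R : Type} [CommRing R] (𝒜 : ℕ → AddSubgroup R) [GradedRing 𝒜] : Ideal R :=
  (HomogeneousIdeal.irrelevant 𝒜).toIdeal

/-- The ideal `m₀R` of `R` generated by the maximal ideal of the base ring `R₀ = 𝒜 0`. -/
def mzR {R : Type} [CommRing R] (𝒜 : ℕ → AddSubgroup R) [GradedRing 𝒜]
    [IsLocalRing (𝒜 0)] : Ideal R :=
  Ideal.span (Subtype.val '' ((IsLocalRing.maximalIdeal (𝒜 0) : Ideal (𝒜 0)) : Set (𝒜 0)))

open scoped Pointwise

theorem WellFoundedLT.antitone₂_chain_condition {α : Type*} [PartialOrder α] [WellFoundedLT α]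
    {f : ℕ × ℕ → α} (hf : Antitone f) : ∃ n, ∀ m, n ≤ m → ∀ k, f (n, k) = f (m, k) := by
  obtain ⟨_, ⟨⟨j₀, k₀⟩, rfl⟩, hmin⟩ :=
    (wellFounded_lt (α := α)).has_min (Set.range f) ⟨_, 0, rfl⟩
  have corner : ∀ j k, j₀ ≤ j → k₀ ≤ k → f (j, k) = f (j₀, k₀) := fun j k hj hk =>
    (hf (show (j₀, k₀) ≤ (j, k) from ⟨hj, hk⟩)).eq_of_not_lt (hmin _ ⟨_, rfl⟩)
  choose c hc using fun k => WellFoundedLT.antitone_chain_condition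
    (f := fun j => f (j, k)) fun _ _ h => hf (show (_, k) ≤ (_, k) from ⟨h, le_rfl⟩)
  refine ⟨max j₀ ((Finset.range k₀).sup c), fun m hm k => ?_⟩
  rcases le_or_gt k₀ k with hk | hk
  · rw [corner _ _ (le_max_left _ _) hk, corner _ _ ((le_max_left _ _).trans hm) hk]
  · have hck : c k ≤ max j₀ ((Finset.range k₀).sup c) :=
      (Finset.le_sup (Finset.mem_range.mpr hk)).trans (le_max_right _ _)
    rw [← hc k _ hck, ← hc k _ (hck.trans hm)]

section Melkersson

variable {R X : Type*} [CommRing R] [AddCommGroup X] [Module R X]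

theorem Submodule.mem_torsionBySet_subtype_iff (P : Submodule R X) (s : Set R) (y : P) :
    y ∈ torsionBySet R P s ↔ (y : X) ∈ torsionBySet R X s := by
  simp only [Submodule.mem_torsionBySet_iff, Subtype.ext_iff, Submodule.coe_smul,
    Submodule.coe_zero]

theorem Submodule.antitone_pow_smul (x : R) (L : Submodule R X) :
    Antitone fun k : ℕ => x ^ k • L := by
  intro k k' hk y hy
  obtain ⟨z, hz, rfl⟩ := (Submodule.mem_smul_pointwise_iff_exists _ _ _).mp hy
  refine (Submodule.mem_smul_pointwise_iff_exists _ _ _).mpr ⟨x ^ (k' - k) • z, L.smul_mem _ hz, ?_⟩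
  rw [smul_smul, ← pow_add, Nat.add_sub_cancel' hk]

theorem Submodule.le_of_pow_smul_inf_torsionBy_le {x : R} (htor : ∀ y : X, ∃ n : ℕ, x ^ n • y = 0)
    {L L' : Submodule R X} (hL : L' ≤ L)
    (h : ∀ k : ℕ, x ^ k • L ⊓ torsionBy R X x ≤ x ^ k • L') : L ≤ L' := by
  intro y hy
  obtain ⟨n, hn⟩ := htor y
  induction n generalizing y with
  | zero =>
    rw [pow_zero, one_smul] at hn
    exact hn ▸ L'.zero_mem
  | succ n ih =>
    have hmem : x ^ n • y ∈ x ^ n • L ⊓ torsionBy R X x := by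
      refine Submodule.mem_inf.mpr ⟨Submodule.smul_mem_pointwise_smul _ _ _ hy, ?_⟩
      rwa [Submodule.mem_torsionBy_iff, smul_smul, ← pow_succ']
    obtain ⟨z, hz, hzy⟩ := (Submodule.mem_smul_pointwise_iff_exists _ _ _).mp (h n hmem)
    have hyz : y - z ∈ L' := ih (L.sub_mem hy (hL hz)) (by rw [smul_sub, hzy, sub_self])
    simpa using L'.add_mem hyz hz

/-- For a descending chain `L j`, the submodules `x ^ k • L j ⊓ (0 :_X x)` of the Artinian module
`(0 :_X x)` stabilise in `j` uniformly in `k`, and by `Submodule.le_of_pow_smul_inf_torsionBy_le`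
this forces the chain itself to stabilise. -/
theorem isArtinian_of_pow_smul_eq_zero (x : R) (htor : ∀ y : X, ∃ n : ℕ, x ^ n • y = 0)
    [IsArtinian R (Submodule.torsionBy R X x)] : IsArtinian R X := by
  refine monotone_stabilizes_iff_artinian.mp fun f => ?_
  let L : ℕ → Submodule R X := fun j => OrderDual.ofDual (f j)
  have hL : Antitone L := fun _ _ h => f.monotone h
  set T := Submodule.torsionBy R X x
  obtain ⟨n, hn⟩ := WellFoundedLT.antitone₂_chain_condition
    (f := fun jk : ℕ × ℕ => (x ^ jk.2 • L jk.1).comap T.subtype)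
    fun a b hab => Submodule.comap_mono <|
      (Submodule.antitone_pow_smul x _ hab.2).trans (smul_le_smul_left _ (hL hab.1))
  refine ⟨n, fun m hm => show L n = L m from le_antisymm ?_ (hL hm)⟩
  refine Submodule.le_of_pow_smul_inf_torsionBy_le htor (hL hm) fun k y ⟨hyL, hyT⟩ => ?_
  exact (hn m hm k ▸ hyL : (⟨y, hyT⟩ : T) ∈ (x ^ k • L m).comap T.subtype)

theorem isArtinian_of_forall_pow_smul_eq_zero (s : Finset R) :
    ∀ {X : Type*} [AddCommGroup X] [Module R X], (∀ y : X, ∀ z ∈ s, ∃ n : ℕ, z ^ n • y = 0) →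
      IsArtinian R (Submodule.torsionBySet R X s) → IsArtinian R X := by
  classical
  induction s using Finset.induction_on with
  | empty =>
    intro X _ _ _ hart
    have htop : Submodule.torsionBySet R X ↑(∅ : Finset R) = ⊤ :=
      eq_top_iff.mpr fun y _ => (Submodule.mem_torsionBySet_iff _ _).mpr fun ⟨_, ha⟩ => by
        simp at ha
    rw [htop] at hart
    exact isArtinian_of_linearEquiv Submodule.topEquiv
  | insert z s _ ih =>
    intro X _ _ htor hart
    set T := Submodule.torsionBy R X z
    have hinsert : ∀ y ∈ Submodule.torsionBySet R T s,
        T.subtype y ∈ Submodule.torsionBySet R X ↑(insert z s) := by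
      intro y hy
      rw [Submodule.mem_torsionBySet_subtype_iff, Submodule.mem_torsionBySet_iff] at hy
      refine (Submodule.mem_torsionBySet_iff _ _).mpr fun ⟨a, ha⟩ => ?_
      rcases Finset.mem_insert.mp ha with rfl | ha
      · exact y.2
      · exact hy ⟨a, ha⟩
    have : IsArtinian R T := ih (fun y w hw => ?_) <|
      isArtinian_of_injective (T.subtype.restrict hinsert)
        ((LinearMap.injective_restrict_iff hinsert).mpr (by simp))
    · exact isArtinian_of_pow_smul_eq_zero z fun y => htor y z (Finset.mem_insert_self z s)
    · obtain ⟨n, hn⟩ := htor y w (Finset.mem_insert_of_mem hw)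
      exact ⟨n, Subtype.ext hn⟩

end Melkersson

theorem isArtinian_of_isTorsionBySet_of_isMaximal {R W : Type*} [CommRing R] [AddCommGroup W]
    [Module R W] [Module.Finite R W] {I : Ideal R} [I.IsMaximal]
    (hW : Module.IsTorsionBySet R W I) : IsArtinian R W := by
  let : Module (R ⧸ I) W := hW.module
  have : IsScalarTower R (R ⧸ I) W := hW.isScalarTower
  have : Module.Finite (R ⧸ I) W := Module.Finite.of_restrictScalars_finite R (R ⧸ I) W
  let : Field (R ⧸ I) := Ideal.Quotient.field I
  exact isArtinian_of_surjective_algebraMap (R := R ⧸ I) Ideal.Quotient.mk_surjective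

section TorsionGamma

variable {R X : Type} [CommRing R] [AddCommGroup X] [Module R X]

theorem mem_torsionGamma_iff {J : Ideal R} {y : X} :
    y ∈ torsionGamma J X ↔ ∃ n : ℕ, y ∈ Submodule.torsionBySet R X ↑(J ^ n) :=
  Submodule.mem_iSup_of_directed _ <| Monotone.directed_le fun _ _ hnm =>
    Submodule.torsionBySet_le_torsionBySet_of_subset (Ideal.pow_le_pow_right hnm)

theorem torsionGamma_eq_top_of_support_subset [IsNoetherianRing R] {J : Ideal R}
    (hsupp : ∀ p ∈ Module.support R X, J ≤ p.asIdeal) : torsionGamma J X = ⊤ := by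
  refine eq_top_iff.mpr fun y _ => mem_torsionGamma_iff.mpr ?_
  have hsub : PrimeSpectrum.zeroLocus (Module.annihilator R (R ∙ y) : Set R) ⊆
      PrimeSpectrum.zeroLocus (J : Set R) := by
    rw [← Module.support_eq_zeroLocus]
    exact fun p hp => hsupp p <|
      Module.support_subset_of_injective _ (Submodule.subtype_injective _) hp
  obtain ⟨n, hn⟩ := Ideal.exists_pow_le_of_le_radical_of_fg
    ((PrimeSpectrum.zeroLocus_subset_zeroLocus_iff _ _).mp hsub) (IsNoetherian.noetherian J)
  refine ⟨n, (Submodule.mem_torsionBySet_iff _ _).mpr fun r => ?_⟩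
  exact (Submodule.mem_annihilator_span_singleton _ _).mp (hn r.2)

theorem torsionGamma_inf_le_torsionGamma_sup (J₁ J₂ : Ideal R) :
    torsionGamma J₁ X ⊓ torsionGamma J₂ X ≤ torsionGamma (J₁ ⊔ J₂) X := by
  rintro y ⟨hy₁, hy₂⟩
  obtain ⟨n₁, hn₁⟩ := mem_torsionGamma_iff.mp hy₁
  obtain ⟨n₂, hn₂⟩ := mem_torsionGamma_iff.mp hy₂
  refine mem_torsionGamma_iff.mpr ⟨n₁ + n₂, (Submodule.mem_torsionBySet_iff _ _).mpr ?_⟩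
  rintro ⟨r, hr⟩
  obtain ⟨a, ha, b, hb, rfl⟩ := Submodule.mem_sup.mp (Ideal.sup_pow_add_le_pow_sup_pow hr)
  rw [add_smul, (Submodule.mem_torsionBySet_iff _ _).mp hn₁ ⟨a, ha⟩,
    (Submodule.mem_torsionBySet_iff _ _).mp hn₂ ⟨b, hb⟩, add_zero]

theorem isArtinian_of_torsionGamma_eq_top {I : Ideal R} (hI : I.FG) (htor : torsionGamma I X = ⊤)
    [IsArtinian R (Submodule.torsionBySet R X I)] : IsArtinian R X := by
  obtain ⟨s, rfl⟩ := hI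
  refine isArtinian_of_forall_pow_smul_eq_zero s (fun y z hz => ?_) ?_
  · obtain ⟨n, hn⟩ := mem_torsionGamma_iff.mp (htor ▸ Submodule.mem_top : y ∈ torsionGamma _ X)
    exact ⟨n, (Submodule.mem_torsionBySet_iff _ _).mp hn
      ⟨z ^ n, Ideal.pow_mem_pow (Ideal.subset_span hz) n⟩⟩
  · rwa [Submodule.torsionBySet_eq_torsionBySet_span]

theorem isArtinian_torsionGamma_of_isMaximal_sup [IsNoetherianRing R] {J₁ J₂ : Ideal R}
    [(J₁ ⊔ J₂).IsMaximal] (htor : torsionGamma J₂ X = ⊤)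
    [Module.Finite R (Submodule.torsionBySet R X J₂)] : IsArtinian R (torsionGamma J₁ X) := by
  set Γ := torsionGamma J₁ X
  have hsocle : ∀ y ∈ Submodule.torsionBySet R Γ ↑(J₁ ⊔ J₂),
      Γ.subtype y ∈ Submodule.torsionBySet R X J₂ := fun y hy =>
    Submodule.torsionBySet_le_torsionBySet_of_subset (SetLike.coe_subset_coe.mpr le_sup_right)
      ((Submodule.mem_torsionBySet_subtype_iff _ _ _).mp hy)
  have : IsNoetherian R (Submodule.torsionBySet R Γ ↑(J₁ ⊔ J₂)) :=
    isNoetherian_of_injective (Γ.subtype.restrict hsocle)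
      ((LinearMap.injective_restrict_iff hsocle).mpr (Submodule.ker_subtype Γ ▸ disjoint_bot_right))
  have : IsArtinian R (Submodule.torsionBySet R Γ ↑(J₁ ⊔ J₂)) :=
    isArtinian_of_isTorsionBySet_of_isMaximal (Submodule.torsionBySet_isTorsionBySet _)
  refine isArtinian_of_torsionGamma_eq_top (I := J₁ ⊔ J₂) (IsNoetherian.noetherian _)
    (eq_top_iff.mpr fun y _ => ?_)
  obtain ⟨n, hn⟩ := mem_torsionGamma_iff.mp <|
    torsionGamma_inf_le_torsionGamma_sup J₁ J₂ ⟨y.2, htor ▸ Submodule.mem_top⟩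
  exact mem_torsionGamma_iff.mpr ⟨n, (Submodule.mem_torsionBySet_subtype_iff _ _ _).mpr hn⟩

end TorsionGamma

section Graded

variable {R : Type} [CommRing R] (𝒜 : ℕ → AddSubgroup R) [GradedRing 𝒜] [IsLocalRing (𝒜 0)]

theorem mzR_sup_irrIdeal_eq_comap :
    mzR 𝒜 ⊔ irrIdeal 𝒜 =
      (IsLocalRing.maximalIdeal (𝒜 0)).comap (GradedRing.projZeroRingHom' 𝒜) := by
  apply le_antisymm
  · refine sup_le (Ideal.span_le.mpr ?_) fun r hr => ?_
    · rintro _ ⟨a, ha, rfl⟩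
      simpa using ha
    · have : GradedRing.projZeroRingHom' 𝒜 r = 0 := Subtype.ext hr
      simp [this]
  · intro r hr
    set a := GradedRing.projZeroRingHom' 𝒜 r
    have ha : (a : R) ∈ mzR 𝒜 := Ideal.subset_span ⟨a, hr, rfl⟩
    have hra : r - a ∈ irrIdeal 𝒜 := by
      show GradedRing.projZeroRingHom 𝒜 (r - a) = 0
      rw [map_sub, ← GradedRing.coe_projZeroRingHom'_apply, ← GradedRing.coe_projZeroRingHom'_apply,
        GradedRing.projZeroRingHom'_apply_coe, sub_self]
    simpa using Submodule.add_mem_sup ha hra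

instance mzR_sup_irrIdeal_isMaximal : (mzR 𝒜 ⊔ irrIdeal 𝒜).IsMaximal := by
  rw [mzR_sup_irrIdeal_eq_comap]
  exact Ideal.comap_isMaximal_of_surjective _ (GradedRing.projZeroRingHom'_surjective 𝒜)

end Graded

section ExtZero

variable {R : Type} [CommRing R]

instance linearYoneda_obj_preservesFiniteLimits (Y : ModuleCat R) :
    PreservesFiniteLimits ((linearYoneda R (ModuleCat R)).obj Y) := by
  have e : (linearYoneda R (ModuleCat R)).obj Y ⋙ forget (ModuleCat R) = yoneda.obj Y :=
    Functor.congr_obj (whiskering_linearYoneda R (ModuleCat R)) Y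
  constructor
  intro J _ _
  have : PreservesLimitsOfShape J ((linearYoneda R (ModuleCat R)).obj Y ⋙ forget (ModuleCat R)) :=
    e ▸ inferInstance
  have : ReflectsLimitsOfShape J (forget (ModuleCat R)) :=
    reflectsLimitsOfShape_of_reflectsIsomorphisms
  exact preservesLimitsOfShape_of_reflects_of_preserves _ (forget (ModuleCat R))

def extZeroIso (Z Y : ModuleCat R) :
    ((Ext R (ModuleCat R) 0).obj (op Z)).obj Y ≅ ModuleCat.of R (Z ⟶ Y) :=
  have : PreservesFiniteColimits ((linearYoneda R (ModuleCat R)).obj Y).rightOp :=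
    preservesFiniteColimits_rightOp _
  (((linearYoneda R (ModuleCat R)).obj Y).rightOp.leftDerivedZeroIsoSelf.app Z).unop.symm

theorem Module.Finite.torsionBySet_of_finite_hom (I : Ideal R) (X : ModuleCat R)
    [Module.Finite R (ModuleCat.of R (R ⧸ I) ⟶ X)] :
    Module.Finite R (Submodule.torsionBySet R X I) := by
  let eval : (ModuleCat.of R (R ⧸ I) ⟶ X) →ₗ[R] Submodule.torsionBySet R X I :=
    { toFun f := ⟨f (Ideal.Quotient.mk I 1), (Submodule.mem_torsionBySet_iff _ _).mpr fun a => by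
        have : (a : R) • Ideal.Quotient.mk I 1 = 0 := by
          rw [Algebra.smul_def, map_one, mul_one, Ideal.Quotient.algebraMap_eq,
            Ideal.Quotient.eq_zero_iff_mem]
          exact a.2
        rw [← map_smul, this, map_zero]⟩
      map_add' _ _ := rfl
      map_smul' _ _ := rfl }
  refine Module.Finite.of_surjective eval fun b => ?_
  refine ⟨ModuleCat.ofHom (Submodule.liftQ I (LinearMap.toSpanSingleton R X b) fun r hr => ?_), ?_⟩
  · exact (Submodule.mem_torsionBySet_iff _ _).mp b.2 ⟨r, hr⟩
  · exact Subtype.ext (one_smul R (b : X))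

end ExtZero

theorem stmt6_general {R : Type} [CommRing R] [IsNoetherianRing R]
    (𝒜 : ℕ → AddSubgroup R) [GradedRing 𝒜] [IsLocalRing (𝒜 0)]
    (M N : Type) [AddCommGroup M] [Module R M]
    [AddCommGroup N] [Module R N]
    (i : ℕ)
    (hsupp : ∀ p ∈ Module.support R (GLC (irrIdeal 𝒜) M i N), irrIdeal 𝒜 ≤ p.asIdeal)
    (hext : ∀ j : ℕ, Module.Finite R
      (((Ext R (ModuleCat R) j).obj (op (ModuleCat.of R (R ⧸ irrIdeal 𝒜)))).obj
        (GLC (irrIdeal 𝒜) M i N))) :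
    IsArtinian R (torsionGamma (mzR 𝒜) (GLC (irrIdeal 𝒜) M i N)) := by
  set H := GLC (irrIdeal 𝒜) M i N
  have := hext 0
  have : Module.Finite R (ModuleCat.of R (R ⧸ irrIdeal 𝒜) ⟶ H) :=
    Module.Finite.equiv (extZeroIso _ H).toLinearEquiv
  have := Module.Finite.torsionBySet_of_finite_hom (irrIdeal 𝒜) H
  exact isArtinian_torsionGamma_of_isMaximal_sup (torsionGamma_eq_top_of_support_subset hsupp)

/-- If `H^i_{R_+}(M,N)` is `R_+`-cofinite, then `Γ_{m₀R}(H^i_{R_+}(M,N))` is Artinian. -/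
theorem stmt6 {R : Type} [CommRing R] [IsNoetherianRing R]
    (𝒜 : ℕ → AddSubgroup R) [GradedRing 𝒜] [IsLocalRing (𝒜 0)]
    (hhom : Subring.closure ((𝒜 0 : Set R) ∪ (𝒜 1 : Set R)) = ⊤)
    (M N : Type) [AddCommGroup M] [Module R M] [Module.Finite R M]
    [AddCommGroup N] [Module R N] [Module.Finite R N]
    (ℳ : ℤ → AddSubgroup M) [SetLike.GradedSMul 𝒜 ℳ] [DirectSum.Decomposition ℳ]
    (𝒩 : ℤ → AddSubgroup N) [SetLike.GradedSMul 𝒜 𝒩] [DirectSum.Decomposition 𝒩]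
    (i : ℕ)
    (hsupp : ∀ p ∈ Module.support R (GLC (irrIdeal 𝒜) M i N), irrIdeal 𝒜 ≤ p.asIdeal)
    (hext : ∀ j : ℕ, Module.Finite R
      (((Ext R (ModuleCat R) j).obj (op (ModuleCat.of R (R ⧸ irrIdeal 𝒜)))).obj
        (GLC (irrIdeal 𝒜) M i N))) :
    IsArtinian R (torsionGamma (mzR 𝒜) (GLC (irrIdeal 𝒜) M i N)) :=
  stmt6_general 𝒜 M N i hsupp hext
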